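/- arXiv:1307.5095 — 2 statements merged into one kernel-verified Lean document; each statement's English description precedes it below -/
import Mathlib

section
/- Let N = 2^n and let c : {0,...,n-1} → ℕ with c(j) = (j+1)·2^j be the complexity gain of freezing a group at stage j, where a group at stage j contains 2^j channels. Among all multisets of groups (with multiplicity a(j) of groups chosen at stage j, a(j) ≤ N/2^j) whose total channel count Σ_j a(j)·2^j equals a fixed k' with 0 ≤ k' < N, the total gain Σ_j a(j)·c(j) is maximized exactly when a(j) = bit_j(k'), the j-th bit of the binary representation of k'. In particular, any optimal solution has a(j) ≤ 1 for all j. -/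
/-!
Write the gain as `∑_{i<n} T_i(a)` with `T_i(a) = ∑_{i ≤ j < n} a_j 2^j`, the number of channels
frozen at stages `≥ i`: a group frozen at stage `j` is counted by the `j + 1` tails `T_0, …, T_j`.
Each `T_i(a)` is a multiple of `2^i` that is at most `k'`. For a 0/1 pattern `b` with the same
channel count the stages below `i` contribute less than `2^i`, so `T_i(b)` is the largest such
multiple. Hence the binary digits of `k'` maximize every tail at once, and equal gains force
equal tails, hence equal digits.
-/

open Finset

theorem Nat.le_of_dvd_of_lt_add {d x y : ℕ} (hx : d ∣ x) (hy : d ∣ y) (h : x < y + d) :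
    x ≤ y := by
  obtain ⟨p, rfl⟩ := hx
  obtain ⟨q, rfl⟩ := hy
  have : p < q + 1 := Nat.lt_of_mul_lt_mul_left (by rwa [mul_add_one])
  exact Nat.mul_le_mul_left d (Nat.lt_succ_iff.mp this)

theorem Finset.sum_range_sum_Ico_eq_sum_range_succ_nsmul {M : Type*} [AddCommMonoid M]
    (n : ℕ) (f : ℕ → M) :
    ∑ i ∈ range n, ∑ j ∈ Ico i n, f j = ∑ j ∈ range n, (j + 1) • f j := by
  rw [sum_comm' (t' := range n) (s' := fun j => range (j + 1))]
  · simp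
  · intro i j; simp only [mem_range, mem_Ico]; omega

theorem Nat.sum_range_boole_testBit_mul_two_pow {n k : ℕ} (hk : k < 2 ^ n) :
    ∑ j ∈ range n, (if k.testBit j then 1 else 0) * 2 ^ j = k := by
  have hbits : (range n).filter (fun j => k.testBit j) = k.bitIndices.toFinset := by
    ext j
    simp only [mem_filter, mem_range, List.mem_toFinset, Nat.mem_bitIndices, and_iff_right_iff_imp]
    intro hj
    by_contra! hnj
    rw [Nat.testBit_lt_two_pow (hk.trans_le (Nat.pow_le_pow_right two_pos hnj))] at hj
    exact Bool.false_ne_true hj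
  simp_rw [ite_mul, one_mul, zero_mul]
  rw [← sum_filter, hbits, sum_toFinset_bitIndices_two_pow]

theorem Nat.sum_range_mul_two_pow_lt {b : ℕ → ℕ} {i : ℕ} (hb : ∀ j < i, b j ≤ 1) :
    ∑ j ∈ range i, b j * 2 ^ j < 2 ^ i :=
  calc ∑ j ∈ range i, b j * 2 ^ j ≤ ∑ j ∈ range i, 2 ^ j :=
        sum_le_sum fun j hj => mul_le_of_le_one_left (Nat.zero_le _) (hb j (mem_range.mp hj))
    _ < 2 ^ i := Nat.geomSum_lt le_rfl fun _ => mem_range.mp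

theorem Finset.eq_of_forall_sum_Ico_eq {M : Type*} [AddCommMonoid M] [IsRightCancelAdd M]
    {n : ℕ} {f g : ℕ → M} (h : ∀ i < n, ∑ j ∈ Ico i n, f j = ∑ j ∈ Ico i n, g j) :
    ∀ j < n, f j = g j := by
  intro j hj
  have hsucc : ∑ i ∈ Ico (j + 1) n, f i = ∑ i ∈ Ico (j + 1) n, g i := by
    rcases Nat.lt_or_ge (j + 1) n with hlt | hge
    · exact h _ hlt
    · simp [Ico_eq_empty_of_le hge]
  have := h j hj
  rw [sum_eq_sum_Ico_succ_bot hj, sum_eq_sum_Ico_succ_bot hj, hsucc] at this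
  exact add_right_cancel this

section BinaryGain

variable {n : ℕ} {a b : ℕ → ℕ}

theorem sum_mul_succ_mul_two_pow_eq_sum_sum_Ico (a : ℕ → ℕ) :
    ∑ j ∈ range n, a j * ((j + 1) * 2 ^ j) = ∑ i ∈ range n, ∑ j ∈ Ico i n, a j * 2 ^ j := by
  rw [sum_range_sum_Ico_eq_sum_range_succ_nsmul]
  exact sum_congr rfl fun j _ => by rw [smul_eq_mul, mul_left_comm]

theorem sum_Ico_mul_two_pow_le_of_le_one (hb : ∀ j < n, b j ≤ 1)
    (h : ∑ j ∈ range n, a j * 2 ^ j = ∑ j ∈ range n, b j * 2 ^ j) {i : ℕ} (hi : i ≤ n) :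
    ∑ j ∈ Ico i n, a j * 2 ^ j ≤ ∑ j ∈ Ico i n, b j * 2 ^ j := by
  have hdvd (c : ℕ → ℕ) : 2 ^ i ∣ ∑ j ∈ Ico i n, c j * 2 ^ j :=
    dvd_sum fun j hj => dvd_mul_of_dvd_right (pow_dvd_pow 2 (mem_Ico.mp hj).1) _
  have hlow : ∑ j ∈ range i, b j * 2 ^ j < 2 ^ i :=
    Nat.sum_range_mul_two_pow_lt fun j hj => hb j (hj.trans_le hi)
  refine Nat.le_of_dvd_of_lt_add (hdvd a) (hdvd b) ?_
  rw [← sum_range_add_sum_Ico _ hi, ← sum_range_add_sum_Ico _ hi] at h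
  omega

theorem sum_mul_succ_mul_two_pow_le_of_le_one (hb : ∀ j < n, b j ≤ 1)
    (h : ∑ j ∈ range n, a j * 2 ^ j = ∑ j ∈ range n, b j * 2 ^ j) :
    ∑ j ∈ range n, a j * ((j + 1) * 2 ^ j) ≤ ∑ j ∈ range n, b j * ((j + 1) * 2 ^ j) := by
  simp only [sum_mul_succ_mul_two_pow_eq_sum_sum_Ico]
  exact sum_le_sum fun i hi =>
    sum_Ico_mul_two_pow_le_of_le_one hb h (mem_range.mp hi).le

theorem eq_of_sum_mul_succ_mul_two_pow_eq_of_le_one (hb : ∀ j < n, b j ≤ 1)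
    (h : ∑ j ∈ range n, a j * 2 ^ j = ∑ j ∈ range n, b j * 2 ^ j)
    (heq : ∑ j ∈ range n, a j * ((j + 1) * 2 ^ j) = ∑ j ∈ range n, b j * ((j + 1) * 2 ^ j)) :
    ∀ j < n, a j = b j := by
  simp only [sum_mul_succ_mul_two_pow_eq_sum_sum_Ico] at heq
  have htails := (sum_eq_sum_iff_of_le fun i hi =>
    sum_Ico_mul_two_pow_le_of_le_one hb h (mem_range.mp hi).le).mp heq
  intro j hj
  exact Nat.eq_of_mul_eq_mul_right (Nat.two_pow_pos j)
    (eq_of_forall_sum_Ico_eq (fun i hi => htails i (mem_range.mpr hi)) j hj)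

end BinaryGain

theorem stmt_3_general (n k' : ℕ) (hk : k' < 2 ^ n)
    (a : ℕ → ℕ)
    (hrate : ∑ j ∈ Finset.range n, a j * 2 ^ j = k') :
    (∑ j ∈ Finset.range n, a j * ((j + 1) * 2 ^ j) ≤
        ∑ j ∈ Finset.range n, (if k'.testBit j then 1 else 0) * ((j + 1) * 2 ^ j)) ∧
    ((∑ j ∈ Finset.range n, a j * ((j + 1) * 2 ^ j) =
        ∑ j ∈ Finset.range n, (if k'.testBit j then 1 else 0) * ((j + 1) * 2 ^ j)) →
      (∀ j < n, a j = if k'.testBit j then 1 else 0) ∧ ∀ j < n, a j ≤ 1) := by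
  have hbit : ∀ j < n, (if k'.testBit j then 1 else 0) ≤ 1 := fun j _ => by split <;> simp
  have hsum : ∑ j ∈ range n, a j * 2 ^ j =
      ∑ j ∈ range n, (if k'.testBit j then 1 else 0) * 2 ^ j := by
    rw [hrate, Nat.sum_range_boole_testBit_mul_two_pow hk]
  refine ⟨sum_mul_succ_mul_two_pow_le_of_le_one hbit hsum, fun heq => ?_⟩
  have hbits := eq_of_sum_mul_succ_mul_two_pow_eq_of_le_one hbit hsum heq
  exact ⟨hbits, fun j hj => (hbits j hj).trans_le (hbit j hj)⟩

/-- Without the performance constraint, among all multiplicity assignments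
`a : stage → ℕ` with `a j ≤ N/2^j` freezing exactly `k'` channels
(`∑ a j · 2^j = k'`, `k' < N = 2^n`), the total complexity gain
`∑ a j · (j+1) · 2^j` is maximized exactly by the binary digits of `k'`;
in particular any optimal solution has `a j ≤ 1` for all `j`. -/
theorem stmt_3 (n k' : ℕ) (hk : k' < 2 ^ n)
    (a : ℕ → ℕ)
    (hfeas : ∀ j < n, a j ≤ 2 ^ n / 2 ^ j)
    (hrate : ∑ j ∈ Finset.range n, a j * 2 ^ j = k') :
    (∑ j ∈ Finset.range n, a j * ((j + 1) * 2 ^ j) ≤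
        ∑ j ∈ Finset.range n, (if k'.testBit j then 1 else 0) * ((j + 1) * 2 ^ j)) ∧
    ((∑ j ∈ Finset.range n, a j * ((j + 1) * 2 ^ j) =
        ∑ j ∈ Finset.range n, (if k'.testBit j then 1 else 0) * ((j + 1) * 2 ^ j)) →
      (∀ j < n, a j = if k'.testBit j then 1 else 0) ∧ ∀ j < n, a j ≤ 1) :=
  stmt_3_general n k' hk a hrate
end

section
/- Suppose the performance constraint threshold satisfies m' ≤ m_max, where m_max = max over subsets A of size k of Σ_{i∈A} I(i). Then the optimization problem (maximize Σ c_i x_i subject to Σ f_i x_i = N - k, Σ m_i x_i ≤ N·I(W) - m', mutual exclusiveness x_i + x_j ≤ 1 for descendant pairs, x_i ∈ {0,1}) is feasible: there exists an assignment x satisfying all constraints. -/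
/-! Freeze exactly the leaves of the channels outside a `k`-set `A` attaining `m_max`: this selects
`N - k` channels carrying total weight `N·I(W) - m_max ≤ N·I(W) - m'`, and no two singletons are
in strict inclusion, so mutual exclusiveness holds automatically. -/

section LeafSelection

variable {ι α : Type*} {g : ι → Finset α} {leaf : α → ι}

theorem injective_of_leaf (hleaf : ∀ a, g (leaf a) = {a}) : leaf.Injective :=
  fun a b h => Finset.singleton_injective (by rw [← hleaf a, ← hleaf b, h])

theorem sum_image_leaf [DecidableEq ι] {M : Type*} [AddCommMonoid M]
    (hleaf : ∀ a, g (leaf a) = {a}) (B : Finset α) (φ : Finset α → M) :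
    ∑ l ∈ B.image leaf, φ (g l) = ∑ a ∈ B, φ {a} := by
  rw [Finset.sum_image fun a _ b _ h => injective_of_leaf hleaf h]
  simp only [hleaf]

theorem not_ssubset_of_mem_image_leaf [DecidableEq ι] (hleaf : ∀ a, g (leaf a) = {a})
    {B : Finset α} {i j : ι}
    (hi : i ∈ B.image leaf) (hj : j ∈ B.image leaf) : ¬g j ⊂ g i := by
  obtain ⟨a, -, rfl⟩ := Finset.mem_image.1 hi
  obtain ⟨b, -, rfl⟩ := Finset.mem_image.1 hj
  rw [hleaf, hleaf, Finset.ssubset_singleton_iff]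
  exact Finset.singleton_ne_empty b

end LeafSelection

theorem stmt_8_general (N k : ℕ)
    (I : Fin N → ℝ) (IW : ℝ)
    (htot : ∑ i, I i = N * IW)
    (g : Fin (2 * N - 1) → Finset (Fin N))
    (hleaf : ∀ i : Fin N, ∃ l, g l = {i})
    (Desc : Fin (2 * N - 1) → Fin (2 * N - 1) → Prop)
    (hdesc : ∀ i j, Desc i j → g j ⊂ g i)
    (m' mmax : ℝ)
    (hmmax : IsGreatest {s : ℝ | ∃ A : Finset (Fin N), A.card = k ∧ s = ∑ i ∈ A, I i} mmax)
    (hm' : m' ≤ mmax) :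
    ∃ x : Fin (2 * N - 1) → ℕ,
      (∀ i, x i ≤ 1) ∧
      (∑ i, (g i).card * x i = N - k) ∧
      ((∑ i, (x i : ℝ) * ∑ j ∈ g i, I j) ≤ N * IW - m') ∧
      (∀ i j, Desc i j → x i + x j ≤ 1) := by
  obtain ⟨A, hAcard, rfl⟩ := hmmax.1
  choose leaf hleaf using hleaf
  refine ⟨fun l => if l ∈ Aᶜ.image leaf then 1 else 0, fun l => ite_le_one le_rfl zero_le_one,
    ?_, ?_, ?_⟩
  · simp only [mul_ite, mul_one, mul_zero, Finset.sum_ite_mem, Finset.univ_inter]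
    rw [sum_image_leaf hleaf Aᶜ Finset.card]
    simp [Finset.card_compl, hAcard]
  · have hsplit := Finset.sum_compl_add_sum A I
    simp only [Nat.cast_ite, Nat.cast_one, Nat.cast_zero, ite_mul, one_mul, zero_mul,
      Finset.sum_ite_mem, Finset.univ_inter]
    rw [sum_image_leaf hleaf Aᶜ fun s => ∑ j ∈ s, I j]
    simp only [Finset.sum_singleton]
    linarith
  · intro i j hij
    dsimp only
    split_ifs with hi hj hj
    · exact absurd (hdesc i j hij) (not_ssubset_of_mem_image_leaf hleaf hi hj)
    all_goals norm_num

/-- If `m' ≤ m_max`, the optimization problem (maximize gain subject to the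
rate constraint `∑ f_i x_i = N - k`, the performance constraint
`∑ m_i x_i ≤ N·I(W) - m'`, and mutual exclusiveness between groups and their
descendants) is feasible. -/
theorem stmt_8 (n N k : ℕ) (hN : N = 2 ^ n) (hk : 0 < k) (hkN : k ≤ N)
    (I : Fin N → ℝ) (hI : ∀ i, 0 ≤ I i) (IW : ℝ)
    (htot : ∑ i, I i = N * IW)
    (g : Fin (2 * N - 1) → Finset (Fin N))
    (hleaf : ∀ i : Fin N, ∃ l, g l = {i})
    (Desc : Fin (2 * N - 1) → Fin (2 * N - 1) → Prop)
    (hdesc : ∀ i j, Desc i j → g j ⊂ g i)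
    (m' mmax : ℝ)
    (hmmax : IsGreatest {s : ℝ | ∃ A : Finset (Fin N), A.card = k ∧ s = ∑ i ∈ A, I i} mmax)
    (hm' : m' ≤ mmax) :
    ∃ x : Fin (2 * N - 1) → ℕ,
      (∀ i, x i ≤ 1) ∧
      (∑ i, (g i).card * x i = N - k) ∧
      ((∑ i, (x i : ℝ) * ∑ j ∈ g i, I j) ≤ N * IW - m') ∧
      (∀ i j, Desc i j → x i + x j ≤ 1) :=
  stmt_8_general N k I IW htot g hleaf Desc hdesc m' mmax hmmax hm'
end
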